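/- arXiv:1902.10285 — 4 statements merged into one kernel-verified Lean document; each statement's English description precedes it below -/
import Mathlib

section
/- Let A, A' be subalgebras of B₁ ⊗ B₂ ⊗ B₃ (tensor products of matrix algebras over ℂ) with A ⊆ B₁ ⊗ B₂ ⊗ (ℂ·Id) and A' ⊆ (ℂ·Id) ⊗ B₂ ⊗ B₃. If every element of A commutes with every element of A', then the support algebra S(A, B₂) of A on the middle factor commutes with the support algebra S(A', B₂) of A' on the middle factor. -/
set_option synthInstance.maxHeartbeats 1000000
set_option maxHeartbeats 1000000
open TensorProduct

abbrev Mat (n : ℕ) := Matrix (Fin n) (Fin n) ℂ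

/-- The subalgebra `B₁ ⊗ S ⊗ B₃` of `B₁ ⊗ B₂ ⊗ B₃`. -/
noncomputable def middleTensor (n₁ n₂ n₃ : ℕ) (S : Subalgebra ℂ (Mat n₂)) :
    Subalgebra ℂ (Mat n₁ ⊗[ℂ] (Mat n₂ ⊗[ℂ] Mat n₃)) :=
  (Algebra.TensorProduct.map (AlgHom.id ℂ (Mat n₁))
    (Algebra.TensorProduct.map S.val (AlgHom.id ℂ (Mat n₃)))).range

/-- Support algebra of `A` on the middle factor: the intersection of all subalgebras
`S ⊆ B₂` such that `A ⊆ B₁ ⊗ S ⊗ B₃`. -/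
noncomputable def suppMid (n₁ n₂ n₃ : ℕ)
    (A : Subalgebra ℂ (Mat n₁ ⊗[ℂ] (Mat n₂ ⊗[ℂ] Mat n₃))) :
    Subalgebra ℂ (Mat n₂) :=
  sInf {S | A ≤ middleTensor n₁ n₂ n₃ S}

/-- The subalgebra `B₁ ⊗ B₂ ⊗ ℂ·Id`. -/
noncomputable def firstTwo (n₁ n₂ n₃ : ℕ) :
    Subalgebra ℂ (Mat n₁ ⊗[ℂ] (Mat n₂ ⊗[ℂ] Mat n₃)) :=
  (Algebra.TensorProduct.map (AlgHom.id ℂ (Mat n₁))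
    (Algebra.TensorProduct.map (AlgHom.id ℂ (Mat n₂)) (⊥ : Subalgebra ℂ (Mat n₃)).val)).range

/-- The subalgebra `ℂ·Id ⊗ B₂ ⊗ B₃`. -/
noncomputable def lastTwo (n₁ n₂ n₃ : ℕ) :
    Subalgebra ℂ (Mat n₁ ⊗[ℂ] (Mat n₂ ⊗[ℂ] Mat n₃)) :=
  (Algebra.TensorProduct.map (⊥ : Subalgebra ℂ (Mat n₁)).val
    (Algebra.TensorProduct.map (AlgHom.id ℂ (Mat n₂)) (AlgHom.id ℂ (Mat n₃)))).range

/-- Coefficient-extraction map: `x ⊗ (y ⊗ z) ↦ (φ x * ψ z) • y`. -/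
noncomputable def Phi (n₁ n₂ n₃ : ℕ) (φ : Mat n₁ →ₗ[ℂ] ℂ) (ψ : Mat n₃ →ₗ[ℂ] ℂ) :
    (Mat n₁ ⊗[ℂ] (Mat n₂ ⊗[ℂ] Mat n₃)) →ₗ[ℂ] Mat n₂ :=
  (TensorProduct.lid ℂ (Mat n₂)).toLinearMap ∘ₗ
    TensorProduct.map φ
      ((TensorProduct.rid ℂ (Mat n₂)).toLinearMap ∘ₗ LinearMap.lTensor (Mat n₂) ψ)

@[simp] lemma Phi_tmul (n₁ n₂ n₃ : ℕ) (φ : Mat n₁ →ₗ[ℂ] ℂ) (ψ : Mat n₃ →ₗ[ℂ] ℂ)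
    (x : Mat n₁) (y : Mat n₂) (z : Mat n₃) :
    Phi n₁ n₂ n₃ φ ψ (x ⊗ₜ[ℂ] (y ⊗ₜ[ℂ] z)) = (φ x * ψ z) • y := by
  simp [Phi, TensorProduct.smul_tmul', mul_comm, mul_smul]

/-- If `a ∈ B₁ ⊗ S ⊗ B₃` then every middle coefficient of `a` lies in `S`. -/
lemma Phi_mem_of_middleTensor {n₁ n₂ n₃ : ℕ} {S : Subalgebra ℂ (Mat n₂)}
    {a : Mat n₁ ⊗[ℂ] (Mat n₂ ⊗[ℂ] Mat n₃)} (h : a ∈ middleTensor n₁ n₂ n₃ S)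
    (φ : Mat n₁ →ₗ[ℂ] ℂ) (ψ : Mat n₃ →ₗ[ℂ] ℂ) :
    Phi n₁ n₂ n₃ φ ψ a ∈ S := by
  obtain ⟨t, rfl⟩ := h
  induction t using TensorProduct.induction_on with
  | zero => simpa using S.zero_mem
  | add u v hu hv => rw [map_add, map_add]; exact S.add_mem hu hv
  | tmul x s =>
    induction s using TensorProduct.induction_on with
    | zero => simpa using S.zero_mem
    | add u v hu hv =>
      rw [TensorProduct.tmul_add, map_add, map_add]; exact S.add_mem hu hv
    | tmul y z =>
      simp only [AlgHom.toRingHom_eq_coe, RingHom.coe_coe, Algebra.TensorProduct.map_tmul,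
        AlgHom.coe_id, id_eq, Subalgebra.coe_val, Phi_tmul]
      exact S.smul_mem y.2 _

noncomputable def B1 (n : ℕ) : Module.Basis (Fin n × Fin n) ℂ (Mat n) :=
  Matrix.stdBasis ℂ (Fin n) (Fin n)

/-- Expansion of any element along bases of the outer factors, with middle
coefficients given by `Phi`. -/
lemma expand (n₁ n₂ n₃ : ℕ) (x : Mat n₁ ⊗[ℂ] (Mat n₂ ⊗[ℂ] Mat n₃)) :
    x = ∑ i, ∑ k, (B1 n₁ i) ⊗ₜ[ℂ]
      ((Phi n₁ n₂ n₃ ((B1 n₁).coord i) ((B1 n₃).coord k) x) ⊗ₜ[ℂ] B1 n₃ k) := by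
  induction x using TensorProduct.induction_on with
  | zero => simp
  | add u v hu hv =>
    conv_lhs => rw [hu, hv]
    simp [map_add, TensorProduct.add_tmul, TensorProduct.tmul_add, Finset.sum_add_distrib]
  | tmul x s =>
    induction s using TensorProduct.induction_on with
    | zero => simp
    | add u v hu hv =>
      conv_lhs => rw [TensorProduct.tmul_add, hu, hv]
      simp [map_add, TensorProduct.add_tmul, TensorProduct.tmul_add, Finset.sum_add_distrib]
    | tmul y z =>
      simp only [Phi_tmul, Module.Basis.coord_apply]
      conv_lhs => rw [← Module.Basis.sum_repr (B1 n₁) x, ← Module.Basis.sum_repr (B1 n₃) z]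
      simp [TensorProduct.sum_tmul, TensorProduct.tmul_sum, TensorProduct.smul_tmul,
        TensorProduct.tmul_smul, Finset.smul_sum, smul_smul, mul_comm, -Module.Basis.sum_repr]
      rw [Finset.sum_comm]

/-- Every element of `A` lies in `B₁ ⊗ S₀ ⊗ B₃` where `S₀` is generated by the middle
coefficients of elements of `A`. -/
lemma le_middleTensor_adjoin (n₁ n₂ n₃ : ℕ)
    (A : Subalgebra ℂ (Mat n₁ ⊗[ℂ] (Mat n₂ ⊗[ℂ] Mat n₃))) :
    A ≤ middleTensor n₁ n₂ n₃ (Algebra.adjoin ℂ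
      {m | ∃ a ∈ A, ∃ φ ψ, Phi n₁ n₂ n₃ φ ψ a = m}) := by
  intro a ha
  set S₀ := Algebra.adjoin ℂ {m | ∃ a ∈ A, ∃ φ ψ, Phi n₁ n₂ n₃ φ ψ a = m} with hS₀
  rw [expand n₁ n₂ n₃ a]
  apply Subalgebra.sum_mem
  intro i _
  apply Subalgebra.sum_mem
  intro k _
  have hmem : Phi n₁ n₂ n₃ ((B1 n₁).coord i) ((B1 n₃).coord k) a ∈ S₀ :=
    Algebra.subset_adjoin ⟨a, ha, _, _, rfl⟩
  exact ⟨(B1 n₁ i) ⊗ₜ[ℂ] ((⟨_, hmem⟩ : S₀) ⊗ₜ[ℂ] B1 n₃ k), by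
    simp [Algebra.TensorProduct.map_tmul]⟩

/-- `firstTwo` is spanned by pure tensors `x ⊗ y ⊗ 1`. -/
lemma firstTwo_le_span (n₁ n₂ n₃ : ℕ) {a : Mat n₁ ⊗[ℂ] (Mat n₂ ⊗[ℂ] Mat n₃)}
    (h : a ∈ firstTwo n₁ n₂ n₃) :
    a ∈ Submodule.span ℂ {u : Mat n₁ ⊗[ℂ] (Mat n₂ ⊗[ℂ] Mat n₃) |
      ∃ x y, u = x ⊗ₜ[ℂ] (y ⊗ₜ[ℂ] (1 : Mat n₃))} := by
  obtain ⟨t, rfl⟩ := h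
  induction t using TensorProduct.induction_on with
  | zero => simp
  | add u v hu hv => rw [map_add]; exact Submodule.add_mem _ hu hv
  | tmul x s =>
    induction s using TensorProduct.induction_on with
    | zero => simp
    | add u v hu hv =>
      rw [TensorProduct.tmul_add, map_add]; exact Submodule.add_mem _ hu hv
    | tmul y w =>
      obtain ⟨c, hc⟩ := Algebra.mem_bot.mp w.2
      simp only [AlgHom.toRingHom_eq_coe, RingHom.coe_coe, Algebra.TensorProduct.map_tmul,
        AlgHom.coe_id, id_eq, Subalgebra.coe_val]
      rw [← hc, Algebra.algebraMap_eq_smul_one, TensorProduct.tmul_smul,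
        TensorProduct.tmul_smul]
      exact Submodule.smul_mem _ _ (Submodule.subset_span ⟨x, y, rfl⟩)

/-- `lastTwo` is spanned by pure tensors `1 ⊗ y ⊗ z`. -/
lemma lastTwo_le_span (n₁ n₂ n₃ : ℕ) {a : Mat n₁ ⊗[ℂ] (Mat n₂ ⊗[ℂ] Mat n₃)}
    (h : a ∈ lastTwo n₁ n₂ n₃) :
    a ∈ Submodule.span ℂ {u : Mat n₁ ⊗[ℂ] (Mat n₂ ⊗[ℂ] Mat n₃) |
      ∃ y z, u = (1 : Mat n₁) ⊗ₜ[ℂ] (y ⊗ₜ[ℂ] z)} := by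
  obtain ⟨t, rfl⟩ := h
  induction t using TensorProduct.induction_on with
  | zero => simp
  | add u v hu hv => rw [map_add]; exact Submodule.add_mem _ hu hv
  | tmul w s =>
    obtain ⟨c, hc⟩ := Algebra.mem_bot.mp w.2
    induction s using TensorProduct.induction_on with
    | zero => simp
    | add u v hu hv =>
      rw [TensorProduct.tmul_add, map_add]; exact Submodule.add_mem _ hu hv
    | tmul y z =>
      simp only [AlgHom.toRingHom_eq_coe, RingHom.coe_coe, Algebra.TensorProduct.map_tmul,
        AlgHom.coe_id, id_eq, Subalgebra.coe_val]
      rw [← hc, Algebra.algebraMap_eq_smul_one, ← TensorProduct.smul_tmul']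
      exact Submodule.smul_mem _ _ (Submodule.subset_span ⟨y, z, rfl⟩)


section helpers
variable {n₁ n₂ n₃ : ℕ}

private lemma hmul_zero (u : Mat n₁ ⊗[ℂ] (Mat n₂ ⊗[ℂ] Mat n₃)) : u * 0 = 0 := mul_zero u
private lemma hzero_mul (u : Mat n₁ ⊗[ℂ] (Mat n₂ ⊗[ℂ] Mat n₃)) : 0 * u = 0 := zero_mul u
private lemma hmul_add (u v w : Mat n₁ ⊗[ℂ] (Mat n₂ ⊗[ℂ] Mat n₃)) :
    u * (v + w) = u * v + u * w := Distrib.left_distrib u v w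
private lemma hadd_mul (u v w : Mat n₁ ⊗[ℂ] (Mat n₂ ⊗[ℂ] Mat n₃)) :
    (u + v) * w = u * w + v * w := Distrib.right_distrib u v w
private lemma hmul_smul (c : ℂ) (u v : Mat n₁ ⊗[ℂ] (Mat n₂ ⊗[ℂ] Mat n₃)) :
    u * (c • v) = c • (u * v) := mul_smul_comm c u v
private lemma hsmul_mul (c : ℂ) (u v : Mat n₁ ⊗[ℂ] (Mat n₂ ⊗[ℂ] Mat n₃)) :
    (c • u) * v = c • (u * v) := smul_mul_assoc c u v

end helpers

/-- Product formula for coefficients: `a * a'`. -/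
lemma Phi_mul (n₁ n₂ n₃ : ℕ) {a a' : Mat n₁ ⊗[ℂ] (Mat n₂ ⊗[ℂ] Mat n₃)}
    (ha : a ∈ firstTwo n₁ n₂ n₃) (ha' : a' ∈ lastTwo n₁ n₂ n₃)
    (φ φ' : Mat n₁ →ₗ[ℂ] ℂ) (ψ ψ' : Mat n₃ →ₗ[ℂ] ℂ) :
    (φ' 1 * ψ' 1) • Phi n₁ n₂ n₃ φ ψ (a * a')
      = Phi n₁ n₂ n₃ φ ψ' a * Phi n₁ n₂ n₃ φ' ψ a' ∧
    (φ' 1 * ψ' 1) • Phi n₁ n₂ n₃ φ ψ (a' * a)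
      = Phi n₁ n₂ n₃ φ' ψ a' * Phi n₁ n₂ n₃ φ ψ' a := by
  have hsp := firstTwo_le_span n₁ n₂ n₃ ha
  have hsp' := lastTwo_le_span n₁ n₂ n₃ ha'
  clear ha ha'
  induction hsp using Submodule.span_induction with
  | mem u hu =>
    obtain ⟨x, y, rfl⟩ := hu
    induction hsp' using Submodule.span_induction with
    | mem v hv =>
      obtain ⟨y', z', rfl⟩ := hv
      constructor <;>
      · simp only [Algebra.TensorProduct.tmul_mul_tmul, Phi_tmul, one_mul, mul_one]
        rw [smul_mul_assoc, mul_smul_comm, smul_smul, smul_smul]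
        congr 1
        ring
    | zero =>
      exact ⟨by rw [hmul_zero]; simp, by rw [hzero_mul]; simp⟩
    | add v w hv hw ihv ihw =>
      obtain ⟨h1, h2⟩ := ihv; obtain ⟨h3, h4⟩ := ihw
      constructor
      · rw [hmul_add, map_add, smul_add, h1, h3, map_add, mul_add]
      · rw [hadd_mul, map_add, smul_add, h2, h4, map_add, add_mul]
    | smul c v hv ihv =>
      obtain ⟨h1, h2⟩ := ihv
      constructor
      · rw [hmul_smul, map_smul, smul_comm, h1, map_smul, mul_smul_comm]
      · rw [hsmul_mul, map_smul, smul_comm, h2, map_smul, smul_mul_assoc]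
  | zero =>
    exact ⟨by rw [hzero_mul]; simp, by rw [hmul_zero]; simp⟩
  | add u v hu hv ihu ihv =>
    obtain ⟨h1, h2⟩ := ihu; obtain ⟨h3, h4⟩ := ihv
    constructor
    · rw [hadd_mul, map_add, smul_add, h1, h3, map_add, add_mul]
    · rw [hmul_add, map_add, smul_add, h2, h4, map_add, mul_add]
  | smul c u hu ihu =>
    obtain ⟨h1, h2⟩ := ihu
    constructor
    · rw [hsmul_mul, map_smul, smul_comm, h1, map_smul, smul_mul_assoc]
    · rw [hmul_smul, map_smul, smul_comm, h2, map_smul, mul_smul_comm]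

/-- If `A ⊆ B₁ ⊗ B₂ ⊗ ℂ·Id` and `A' ⊆ ℂ·Id ⊗ B₂ ⊗ B₃` commute elementwise, then their
support algebras on the middle factor commute. -/
theorem support_algebras_commute (n₁ n₂ n₃ : ℕ)
    (A A' : Subalgebra ℂ (Mat n₁ ⊗[ℂ] (Mat n₂ ⊗[ℂ] Mat n₃)))
    (hA : A ≤ firstTwo n₁ n₂ n₃) (hA' : A' ≤ lastTwo n₁ n₂ n₃)
    (hcomm : ∀ a ∈ A, ∀ a' ∈ A', a * a' = a' * a) :
    ∀ s ∈ suppMid n₁ n₂ n₃ A, ∀ s' ∈ suppMid n₁ n₂ n₃ A', s * s' = s' * s := by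
  intro s hs s' hs'
  set G : Set (Mat n₂) := {m | ∃ a ∈ A, ∃ φ ψ, Phi n₁ n₂ n₃ φ ψ a = m} with hG
  set G' : Set (Mat n₂) := {m | ∃ a ∈ A', ∃ φ ψ, Phi n₁ n₂ n₃ φ ψ a = m} with hG'
  have hle : suppMid n₁ n₂ n₃ A ≤ Algebra.adjoin ℂ G :=
    sInf_le (le_middleTensor_adjoin n₁ n₂ n₃ A)
  have hle' : suppMid n₁ n₂ n₃ A' ≤ Algebra.adjoin ℂ G' :=
    sInf_le (le_middleTensor_adjoin n₁ n₂ n₃ A')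
  have hsS : s ∈ Algebra.adjoin ℂ G := hle hs
  have hsS' : s' ∈ Algebra.adjoin ℂ G' := hle' hs'
  -- generators commute
  have hgen : ∀ m ∈ G, ∀ m' ∈ G', m * m' = m' * m := by
    rintro m ⟨a, ha, φ, ψ', rfl⟩ m' ⟨a', ha', φ', ψ, rfl⟩
    have h1 := (Phi_mul n₁ n₂ n₃ (hA ha) (hA' ha') φ φ' ψ ψ').1
    have h2 := (Phi_mul n₁ n₂ n₃ (hA ha) (hA' ha') φ φ' ψ ψ').2
    rw [hcomm a ha a' ha'] at h1
    rw [← h1, ← h2]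
  -- lift to adjoin
  have hc1 : Algebra.adjoin ℂ G' ≤ Subalgebra.centralizer ℂ G := by
    apply Algebra.adjoin_le
    intro m' hm'
    exact (Subalgebra.mem_centralizer_iff ℂ).mpr fun m hm => hgen m hm m' hm'
  have hs'c : ∀ m ∈ G, m * s' = s' * m :=
    Subalgebra.mem_centralizer_iff ℂ |>.mp (hc1 hsS')
  have hc2 : Algebra.adjoin ℂ G ≤ Subalgebra.centralizer ℂ {s'} := by
    apply Algebra.adjoin_le
    intro m hm
    exact (Subalgebra.mem_centralizer_iff ℂ).mpr fun g hg => by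
      rw [Set.mem_singleton_iff] at hg; subst hg; exact (hs'c m hm).symm
  have := Subalgebra.mem_centralizer_iff ℂ |>.mp (hc2 hsS) s' rfl
  exact this.symm
end

section
/- Let α be an algebra automorphism of the tensor product of finite-dimensional matrix algebras indexed by vertices of a metric graph, with range R (meaning: for any operator O supported on a site x, α(O) is supported within distance R of x). Then α⁻¹ also has range R. -/
/-! An operator is supported on `S` exactly when it commutes with every single-site matrix
unit `|a⟩⟨b|` at a site outside `S`, and operators with disjoint supports commute. If `y` lies
outside the closed `R`-ball around `x`, then `α` maps a matrix unit at `y` into the `R`-ball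
around `y`, which misses `x`, so it commutes with any `O` supported at `x`. Applying `α⁻¹`, the
matrix unit commutes with `α⁻¹ O`; hence `α⁻¹ O` is supported on the `R`-ball around `x`. -/

open Matrix

/-- A configuration of the local (computational-basis) indices of all sites. -/
abbrev Cfg {V : Type} (d : V → ℕ) := ∀ i, Fin (d i)

/-- The algebra of operators on the tensor-product Hilbert space `⊗ᵢ ℂ^{d i}`. -/
abbrev Op {V : Type} [Fintype V] [DecidableEq V] (d : V → ℕ) :=
  Matrix (Cfg d) (Cfg d) ℂ

open Classical in
/-- `M` is supported on the set of sites `S` if `M = N ⊗ Id` for some operator `N`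
acting only on the tensor factors in `S`. -/
def SupportedOn {V : Type} [Fintype V] [DecidableEq V] (d : V → ℕ)
    (S : Set V) (M : Op d) : Prop :=
  ∃ N : Matrix (∀ i : S, Fin (d i.1)) (∀ i : S, Fin (d i.1)) ℂ,
    ∀ f g : Cfg d, M f g =
      if ∀ i ∉ S, f i = g i then N (fun i => f i.1) (fun i => g i.1) else 0

/-- The (minimal) support of an operator: the set of sites belonging to every set on
which the operator is supported.  Scalars have empty support. -/
def Supp {V : Type} [Fintype V] [DecidableEq V] (d : V → ℕ) (M : Op d) : Set V :=
  {x | ∀ S : Set V, SupportedOn d S M → x ∈ S}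

open Function

theorem Function.eq_of_forall_apply_update_eq {ι γ : Type*} [Fintype ι] [DecidableEq ι]
    {β : ι → Type*} (φ : (∀ i, β i) → γ) (hφ : ∀ x i b, φ (update x i b) = φ x)
    (x y : ∀ i, β i) : φ x = φ y := by
  classical
  have key : ∀ s : Finset ι, φ (s.piecewise y x) = φ x := by
    intro s
    induction s using Finset.induction_on with
    | empty => rw [Finset.piecewise_empty]
    | insert i s _ ih => rw [Finset.piecewise_insert, hφ, ih]
  rw [← key Finset.univ, Finset.piecewise_univ]

theorem Set.piecewise_update_of_mem {ι : Type*} [DecidableEq ι] {β : ι → Type*}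
    {s : Set ι} [∀ i, Decidable (i ∈ s)] (f g : ∀ i, β i) {j : ι} (hj : j ∈ s) (b : β j) :
    s.piecewise f (update g j b) = s.piecewise f g := by
  funext i
  by_cases hi : i ∈ s
  · simp [hi]
  · simp [hi, show i ≠ j from fun h => hi (h ▸ hj)]

theorem Set.piecewise_update_of_notMem {ι : Type*} [DecidableEq ι] {β : ι → Type*}
    {s : Set ι} [∀ i, Decidable (i ∈ s)] (f g : ∀ i, β i) {j : ι} (hj : j ∉ s) (b : β j) :
    s.piecewise f (update g j b) = update (s.piecewise f g) j b := by
  funext i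
  by_cases hij : i = j
  · subst hij; simp [hj]
  · by_cases hi : i ∈ s <;> simp [hi, hij]

section Locality

open Classical

variable {V : Type} [Fintype V] [DecidableEq V] {d : V → ℕ}

theorem SupportedOn.apply_eq_zero {S : Set V} {M : Op d} (hM : SupportedOn d S M)
    {f g : Cfg d} {i : V} (hi : i ∉ S) (hfg : f i ≠ g i) : M f g = 0 := by
  obtain ⟨N, hN⟩ := hM
  rw [hN, if_neg fun h => hfg (h i hi)]

theorem SupportedOn.apply_congr {S : Set V} {M : Op d} (hM : SupportedOn d S M)
    {f g f' g' : Cfg d} (hf : ∀ i ∈ S, f i = f' i) (hg : ∀ i ∈ S, g i = g' i)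
    (hfg : ∀ i ∉ S, f i = g i) (hfg' : ∀ i ∉ S, f' i = g' i) : M f g = M f' g' := by
  obtain ⟨N, hN⟩ := hM
  rw [hN, hN, if_pos hfg, if_pos hfg']
  congr 1 <;> funext i
  exacts [hf i i.2, hg i i.2]

theorem mul_apply_of_supportedOn_disjoint {S T : Set V} {M P : Op d}
    (hM : SupportedOn d S M) (hP : SupportedOn d T P) (hST : Disjoint S T) (f g : Cfg d) :
    (M * P) f g = M f (S.piecewise g f) * P (S.piecewise g f) g := by
  rw [Matrix.mul_apply, Finset.sum_eq_single_of_mem _ (Finset.mem_univ _)]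
  intro h _ hne
  obtain ⟨i, hi⟩ := Function.ne_iff.mp hne
  by_cases hiS : i ∈ S
  · rw [Set.piecewise_eq_of_mem _ _ _ hiS] at hi
    rw [hP.apply_eq_zero (Set.disjoint_left.mp hST hiS) hi, mul_zero]
  · rw [Set.piecewise_eq_of_notMem _ _ _ hiS] at hi
    rw [hM.apply_eq_zero hiS (Ne.symm hi), zero_mul]

theorem commute_of_supportedOn_disjoint {S T : Set V} {M P : Op d}
    (hM : SupportedOn d S M) (hP : SupportedOn d T P) (hST : Disjoint S T) :
    Commute M P := by
  ext f g
  rw [mul_apply_of_supportedOn_disjoint hM hP hST,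
    mul_apply_of_supportedOn_disjoint hP hM hST.symm]
  have hSnT : ∀ i ∈ S, i ∉ T := fun _ hi => Set.disjoint_left.mp hST hi
  have hTnS : ∀ i ∈ T, i ∉ S := fun _ hi => Set.disjoint_right.mp hST hi
  by_cases hfg : ∀ i ∉ S ∪ T, f i = g i
  · have hfgT : ∀ i ∉ T, S.piecewise g f i = g i := fun i hiT => by
      by_cases hiS : i ∈ S
      · simp [hiS]
      · simp [hiS, hfg i (by simp [hiS, hiT])]
    have hfgS : ∀ i ∉ S, T.piecewise g f i = g i := fun i hiS => by
      by_cases hiT : i ∈ T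
      · simp [hiT]
      · simp [hiT, hfg i (by simp [hiS, hiT])]
    rw [mul_comm]
    congr 1
    · exact hP.apply_congr (fun i hi => by simp [hTnS i hi]) (fun i hi => by simp [hi]) hfgT
        (fun i hi => by simp [hi])
    · exact hM.apply_congr (fun i hi => by simp [hSnT i hi]) (fun i hi => by simp [hi])
        (fun i hi => by simp [hi]) hfgS
  · push Not at hfg
    obtain ⟨i, hi, hne⟩ := hfg
    rw [Set.mem_union, not_or] at hi
    have hS : S.piecewise g f i ≠ g i := by rwa [Set.piecewise_eq_of_notMem _ _ _ hi.1]
    have hT : T.piecewise g f i ≠ g i := by rwa [Set.piecewise_eq_of_notMem _ _ _ hi.2]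
    rw [hP.apply_eq_zero hi.2 hS, hM.apply_eq_zero hi.1 hT, mul_zero, mul_zero]

noncomputable def siteUnit (d : V → ℕ) (y : V) (a b : Fin (d y)) : Op d :=
  of fun f g => if f y = a ∧ g y = b ∧ ∀ i ≠ y, f i = g i then 1 else 0

theorem siteUnit_apply_eq_ite_left (y : V) (a b : Fin (d y)) (f g : Cfg d) :
    siteUnit d y a b f g = if g y = b ∧ f = update g y a then 1 else 0 := by
  simp only [siteUnit, of_apply, eq_update_iff, and_left_comm]

theorem siteUnit_apply_eq_ite_right (y : V) (a b : Fin (d y)) (f g : Cfg d) :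
    siteUnit d y a b f g = if f y = a ∧ g = update f y b then 1 else 0 := by
  simp only [siteUnit, of_apply, eq_update_iff, eq_comm (a := g _)]

theorem mul_siteUnit_apply (M : Op d) (y : V) (a b : Fin (d y)) (f g : Cfg d) :
    (M * siteUnit d y a b) f g = if g y = b then M f (update g y a) else 0 := by
  simp [mul_apply, siteUnit_apply_eq_ite_left, ite_and]

theorem siteUnit_mul_apply (M : Op d) (y : V) (a b : Fin (d y)) (f g : Cfg d) :
    (siteUnit d y a b * M) f g = if f y = a then M (update f y b) g else 0 := by
  simp [mul_apply, siteUnit_apply_eq_ite_right, ite_and]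

theorem supportedOn_siteUnit (y : V) (a b : Fin (d y)) :
    SupportedOn d {y} (siteUnit d y a b) := by
  refine ⟨of fun u v => if u ⟨y, rfl⟩ = a ∧ v ⟨y, rfl⟩ = b then 1 else 0, fun f g => ?_⟩
  simp only [siteUnit, of_apply, Set.mem_singleton_iff, ← ite_and, and_comm (a := ∀ i, _),
    and_assoc, ne_eq]

theorem supportedOn_of_forall_apply_update {S : Set V} {M : Op d}
    (hzero : ∀ y ∉ S, ∀ f g : Cfg d, f y ≠ g y → M f g = 0)
    (hupdate : ∀ y ∉ S, ∀ f g : Cfg d, f y = g y → ∀ c,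
      M (update f y c) (update g y c) = M f g) :
    SupportedOn d S M := by
  obtain hempty | ⟨⟨f₀⟩⟩ := isEmpty_or_nonempty (Cfg d)
  · exact ⟨0, fun f => isEmptyElim f⟩
  refine ⟨of fun u v => M (fun i => if h : i ∈ S then u ⟨i, h⟩ else f₀ i)
    (fun i => if h : i ∈ S then v ⟨i, h⟩ else f₀ i), fun f g => ?_⟩
  split_ifs with hfg
  · -- `M f g` does not depend on the common values of `f` and `g` outside `S`.
    have hconst := Function.eq_of_forall_apply_update_eq
      (fun c : Cfg d => M (S.piecewise f c) (S.piecewise g c)) (fun c y b => ?_) g f₀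
    · have hext : ∀ h : Cfg d,
          (fun i => if hi : i ∈ S then h i else f₀ i) = S.piecewise h f₀ := fun h => rfl
      have hf : S.piecewise f g = f := funext fun i => by
        by_cases hi : i ∈ S <;> simp [hi, hfg]
      simp only [of_apply, hext]
      rw [← hconst, hf, Set.piecewise_same]
    · by_cases hy : y ∈ S
      · simp only [Set.piecewise_update_of_mem _ _ hy]
      · simp only [Set.piecewise_update_of_notMem _ _ hy]
        exact hupdate y hy _ _ (by simp [hy]) b
  · push Not at hfg
    obtain ⟨y, hy, hne⟩ := hfg
    exact hzero y hy f g hne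

theorem supportedOn_of_commute_siteUnit {S : Set V} {M : Op d}
    (hM : ∀ y ∉ S, ∀ a b, Commute M (siteUnit d y a b)) : SupportedOn d S M := by
  have key : ∀ y ∉ S, ∀ a b (f g : Cfg d), (if g y = b then M f (update g y a) else 0) =
      (if f y = a then M (update f y b) g else 0) := fun y hy a b f g => by
    rw [← mul_siteUnit_apply, ← siteUnit_mul_apply, (hM y hy a b).eq]
  refine supportedOn_of_forall_apply_update (fun y hy f g hne => ?_) (fun y hy f g hfg c => ?_)
  · simpa [hne] using key y hy (g y) (g y) f g
  · simpa [← hfg] using key y hy c (g y) (update f y c) g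

end Locality

/-- If the algebra automorphism `α` has range `R` (images of single-site operators are
supported on the ball of radius `R`), then `α⁻¹` also has range `R`. -/
theorem inverse_qca_has_same_range {V : Type} [Fintype V] [DecidableEq V]
    [PseudoMetricSpace V] (d : V → ℕ) (R : ℝ) (α : Op d ≃ₐ[ℂ] Op d)
    (h : ∀ (x : V) (O : Op d), SupportedOn d {x} O →
      SupportedOn d (Metric.closedBall x R) (α O)) :
    ∀ (x : V) (O : Op d), SupportedOn d {x} O →
      SupportedOn d (Metric.closedBall x R) (α.symm O) := by
  intro x O hO
  refine supportedOn_of_commute_siteUnit fun y hy a b => ?_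
  have hdisj : Disjoint {x} (Metric.closedBall y R) := by
    rwa [Set.disjoint_singleton_left, Metric.mem_closedBall, dist_comm, ← Metric.mem_closedBall]
  have hcomm := (commute_of_supportedOn_disjoint hO (h y _ (supportedOn_siteUnit y a b)) hdisj).map
    α.symm
  rwa [AlgEquiv.symm_apply_apply] at hcomm
end

section
/- Let A be an algebra of operators that is generated by two commuting subalgebras A₁ and A₂ supported on disjoint sets S₁ and S₂. If A is l-visibly simple, then A₁ and A₂ are each l-visibly simple. -/
open Matrix

/-- An algebra `A` of operators is `l`-visibly simple if for every `O ∈ A` and every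
site `x` in the support of `O` there is `P ∈ A` supported within distance `l` of `x`
which does not commute with `O`. -/
def VisiblySimple {V : Type} [Fintype V] [DecidableEq V] [PseudoMetricSpace V]
    (d : V → ℕ) (l : ℝ) (A : Subalgebra ℂ (Op d)) : Prop :=
  ∀ O ∈ A, ∀ x ∈ Supp d O,
    ∃ P ∈ A, SupportedOn d (Metric.closedBall x l) P ∧ O * P ≠ P * O

open scoped Classical

namespace VSAux

variable {V : Type} [Fintype V] [DecidableEq V] {d : V → ℕ}

/-- Merge of a configuration on `S` and one on `Sᶜ`. -/
noncomputable def mrg (S : Set V) (κ : ∀ i : S, Fin (d i.1))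
    (ρ : ∀ i : (Sᶜ : Set V), Fin (d i.1)) : Cfg d :=
  fun i => if h : i ∈ S then κ ⟨i, h⟩ else ρ ⟨i, h⟩

@[simp] lemma mrg_mem {S : Set V} (κ : ∀ i : S, Fin (d i.1))
    (ρ : ∀ i : (Sᶜ : Set V), Fin (d i.1)) {i : V} (h : i ∈ S) :
    mrg S κ ρ i = κ ⟨i, h⟩ := dif_pos h

@[simp] lemma mrg_not_mem {S : Set V} (κ : ∀ i : S, Fin (d i.1))
    (ρ : ∀ i : (Sᶜ : Set V), Fin (d i.1)) {i : V} (h : i ∉ S) :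
    mrg S κ ρ i = ρ ⟨i, h⟩ := dif_neg h

/-- Splitting a configuration into its `S`-part and `Sᶜ`-part. -/
noncomputable def cfgEquiv (S : Set V) :
    Cfg d ≃ (∀ i : S, Fin (d i.1)) × (∀ i : (Sᶜ : Set V), Fin (d i.1)) where
  toFun f := (fun i => f i.1, fun i => f i.1)
  invFun p := mrg S p.1 p.2
  left_inv f := by
    funext i
    by_cases h : i ∈ S
    · exact mrg_mem _ _ h
    · exact mrg_not_mem _ _ h
  right_inv p := by
    obtain ⟨κ, ρ⟩ := p
    simp only [Prod.mk.injEq]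
    refine ⟨funext fun i => mrg_mem κ ρ i.2, funext fun i => mrg_not_mem κ ρ i.2⟩

lemma supportedOn_mono {S S' : Set V} {M : Op d} (h : SupportedOn d S M)
    (hss : S ⊆ S') : SupportedOn d S' M := by
  obtain ⟨N, hN⟩ := h
  by_cases hne : Nonempty (Cfg d)
  · obtain ⟨w⟩ := hne
    set ext : (∀ i : S', Fin (d i.1)) → Cfg d :=
      fun α i => if h : i ∈ S' then α ⟨i, h⟩ else w i with hext
    refine ⟨fun α β => M (ext α) (ext β), ?_⟩
    intro f g
    rw [hN f g]
    dsimp only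
    rw [hN (ext fun i => f i.1) (ext fun i => g i.1)]
    have hrf : (fun (i : S) => (ext fun j => f j.1) i.1) = (fun (i : S) => f i.1) :=
      funext fun i => dif_pos (hss i.2)
    have hrg : (fun (i : S) => (ext fun j => g j.1) i.1) = (fun (i : S) => g i.1) :=
      funext fun i => dif_pos (hss i.2)
    have hcond : (∀ i ∉ S, (ext fun j => f j.1) i = (ext fun j => g j.1) i) ↔
        (∀ i, i ∉ S → i ∈ S' → f i = g i) := by
      constructor
      · intro hc i hi hi'
        have := hc i hi
        simpa only [hext, dif_pos hi'] using this
      · intro hc i hi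
        by_cases hi' : i ∈ S'
        · simp only [hext, dif_pos hi']
          exact hc i hi hi'
        · simp only [hext, dif_neg hi']
    rw [hrf, hrg]
    by_cases h1 : ∀ i ∉ S', f i = g i
    · rw [if_pos h1]
      by_cases h2 : ∀ i ∉ S, f i = g i
      · rw [if_pos h2, if_pos (hcond.mpr fun i hi _ => h2 i hi)]
      · rw [if_neg h2, if_neg]
        intro hc
        exact h2 fun i hi => by
          by_cases hi' : i ∈ S'
          · exact hcond.mp hc i hi hi'
          · exact h1 i hi'
    · rw [if_neg h1, if_neg]
      intro h2
      exact h1 fun i hi => h2 i fun hiS => hi (hss hiS)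
  · exact ⟨0, fun f g => absurd ⟨f⟩ hne⟩



/-- Master collapse lemma: if a summand vanishes whenever the configuration differs
from `c` on `S`, the sum reduces to a sum over configurations of `Sᶜ`. -/
lemma sum_cfg_eq (S : Set V) (F : Cfg d → ℂ) (c : ∀ i : S, Fin (d i.1))
    (h0 : ∀ h : Cfg d, (∃ i : S, h i.1 ≠ c i) → F h = 0) :
    ∑ h : Cfg d, F h = ∑ ρ : (∀ i : (Sᶜ : Set V), Fin (d i.1)), F (mrg S c ρ) := by
  rw [← Equiv.sum_comp (cfgEquiv S).symm F, Fintype.sum_prod_type]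
  rw [Finset.sum_eq_single_of_mem c (Finset.mem_univ c)]
  · rfl
  · intro κ _ hκ
    apply Finset.sum_eq_zero
    intro ρ _
    apply h0
    obtain ⟨i, hi⟩ := Function.ne_iff.mp hκ
    exact ⟨i, by rw [show ((cfgEquiv S).symm (κ, ρ) : Cfg d) i.1 = κ i from mrg_mem _ _ i.2]; exact hi⟩

/-- The "partial evaluation" map: fix the matrix indices on `S` to `(u, v)` and require
the identity pattern there. -/
noncomputable def Tmap (S : Set V) (u v : Cfg d) (M : Op d) : Op d := fun f g =>
  if ∀ i ∈ S, f i = g i then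
    M (fun i => if i ∈ S then u i else f i) (fun i => if i ∈ S then v i else g i)
  else 0

lemma Tmap_sub (S : Set V) (u v : Cfg d) (M M' : Op d) :
    Tmap S u v (M - M') = Tmap S u v M - Tmap S u v M' := by
  funext f g
  simp only [Tmap, Matrix.sub_apply]
  split_ifs <;> simp

lemma not_mem_compl_iff {S : Set V} {i : V} : (i ∉ (Sᶜ : Set V)) ↔ i ∈ S := not_not

lemma supported_entry_ne {S : Set V} {O : Op d}
    {N : Matrix (∀ i : S, Fin (d i.1)) (∀ i : S, Fin (d i.1)) ℂ}
    (hN : ∀ f g : Cfg d, O f g =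
      if ∀ i ∉ S, f i = g i then N (fun i => f i.1) (fun i => g i.1) else 0)
    {f g : Cfg d} (h : ∃ i : V, i ∉ S ∧ f i ≠ g i) : O f g = 0 := by
  obtain ⟨i, hi, hne⟩ := h
  rw [hN, if_neg (fun hcon => hne (hcon i hi))]

lemma Tmap_mul_left {S : Set V} {u v : Cfg d} {O : Op d} (hO : SupportedOn d (Sᶜ) O)
    (M : Op d) : Tmap S u v (O * M) = O * Tmap S u v M := by
  obtain ⟨N₀, hN₀⟩ := hO
  have hOev : ∀ (a : Cfg d) (ρ : ∀ i : (Sᶜ : Set V), Fin (d i.1)),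
      O a (mrg S (fun i : S => a i.1) ρ) = N₀ (fun i => a i.1) ρ := by
    intro a ρ
    rw [hN₀, if_pos]
    · congr 1
      funext i
      rw [mrg_not_mem _ _ i.2]
    · intro i hic
      rw [mrg_mem _ _ (not_mem_compl_iff.mp hic)]
  funext f g
  by_cases hc : ∀ i ∈ S, f i = g i
  · simp only [Tmap, if_pos hc, Matrix.mul_apply]
    -- collapse the left-hand sum at `u` restricted to `S`
    rw [sum_cfg_eq S _ (fun i : S => u i.1) (fun h ⟨i, hi⟩ => by
      have h0 : O (fun j => if j ∈ S then u j else f j) h = 0 := by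
        apply supported_entry_ne hN₀
        refine ⟨i.1, not_mem_compl_iff.mpr i.2, ?_⟩
        rw [if_pos i.2]
        exact fun hcon => hi hcon.symm
      rw [h0, zero_mul])]
    -- collapse the right-hand sum at `f` restricted to `S`
    rw [sum_cfg_eq S _ (fun i : S => f i.1) (fun h ⟨i, hi⟩ => by
      have h0 : O f h = 0 := by
        apply supported_entry_ne hN₀
        exact ⟨i.1, not_mem_compl_iff.mpr i.2, fun hcon => hi hcon.symm⟩
      rw [h0, zero_mul])]
    apply Finset.sum_congr rfl
    intro ρ _
    have e1 : (fun i : S => (fun j => if j ∈ S then u j else f j) i.1) =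
        (fun i : S => u i.1) := funext fun i => if_pos i.2
    have e2 : O (fun j => if j ∈ S then u j else f j)
        (mrg S (fun i : S => u i.1) ρ) = N₀ (fun i : (Sᶜ : Set V) => f i.1) ρ := by
      rw [← e1, hOev]
      congr 1
      funext i
      exact if_neg i.2
    have e3 : O f (mrg S (fun i : S => f i.1) ρ) = N₀ (fun i : (Sᶜ : Set V) => f i.1) ρ :=
      hOev f ρ
    have e4 : (if ∀ i ∈ S, mrg S (fun i : S => f i.1) ρ i = g i then
        M (fun i => if i ∈ S then u i else mrg S (fun i : S => f i.1) ρ i)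
          (fun i => if i ∈ S then v i else g i) else 0) =
        M (mrg S (fun i : S => u i.1) ρ) (fun i => if i ∈ S then v i else g i) := by
      rw [if_pos (fun i hi => by rw [mrg_mem _ _ hi]; exact hc i hi)]
      congr 1
      funext i
      by_cases hi : i ∈ S
      · rw [if_pos hi, mrg_mem _ _ hi]
      · rw [if_neg hi, mrg_not_mem _ _ hi, mrg_not_mem _ _ hi]
    rw [e2, e3, e4]
  · simp only [Tmap, if_neg hc, Matrix.mul_apply]
    symm
    apply Finset.sum_eq_zero
    intro h _
    by_cases hh : ∀ i ∈ S, f i = h i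
    · have : ¬ ∀ i ∈ S, h i = g i := fun hcon =>
        hc fun i hi => (hh i hi).trans (hcon i hi)
      simp only [Tmap, if_neg this, mul_zero]
    · have h0 : O f h = 0 := by
        apply supported_entry_ne hN₀
        push_neg at hh
        obtain ⟨i, hi, hne⟩ := hh
        exact ⟨i, not_mem_compl_iff.mpr hi, hne⟩
      rw [h0, zero_mul]

lemma Tmap_mul_right {S : Set V} {u v : Cfg d} {O : Op d} (hO : SupportedOn d (Sᶜ) O)
    (M : Op d) : Tmap S u v (M * O) = Tmap S u v M * O := by
  obtain ⟨N₀, hN₀⟩ := hO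
  have hOev' : ∀ (a : Cfg d) (ρ : ∀ i : (Sᶜ : Set V), Fin (d i.1)),
      O (mrg S (fun i : S => a i.1) ρ) a = N₀ ρ (fun i => a i.1) := by
    intro a ρ
    rw [hN₀, if_pos]
    · congr 1
      funext i
      rw [mrg_not_mem _ _ i.2]
    · intro i hic
      rw [mrg_mem _ _ (not_mem_compl_iff.mp hic)]
  funext f g
  by_cases hc : ∀ i ∈ S, f i = g i
  · simp only [Tmap, if_pos hc, Matrix.mul_apply]
    -- collapse the left-hand sum at `v` restricted to `S`
    rw [sum_cfg_eq S _ (fun i : S => v i.1) (fun h ⟨i, hi⟩ => by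
      have h0 : O h (fun j => if j ∈ S then v j else g j) = 0 := by
        apply supported_entry_ne hN₀
        refine ⟨i.1, not_mem_compl_iff.mpr i.2, ?_⟩
        rw [if_pos i.2]
        exact hi
      rw [h0, mul_zero])]
    -- collapse the right-hand sum at `g` restricted to `S`
    rw [sum_cfg_eq S _ (fun i : S => g i.1) (fun h ⟨i, hi⟩ => by
      have h0 : O h g = 0 := by
        apply supported_entry_ne hN₀
        exact ⟨i.1, not_mem_compl_iff.mpr i.2, hi⟩
      rw [h0, mul_zero])]
    apply Finset.sum_congr rfl
    intro ρ _
    have e1 : (fun i : S => (fun j => if j ∈ S then v j else g j) i.1) =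
        (fun i : S => v i.1) := funext fun i => if_pos i.2
    have e2 : O (mrg S (fun i : S => v i.1) ρ) (fun j => if j ∈ S then v j else g j) =
        N₀ ρ (fun i : (Sᶜ : Set V) => g i.1) := by
      have e2' : (fun i : (Sᶜ : Set V) => (fun j => if j ∈ S then v j else g j) i.1) =
          (fun i : (Sᶜ : Set V) => g i.1) := funext fun i => if_neg i.2
      rw [← e1]
      exact (hOev' (fun j => if j ∈ S then v j else g j) ρ).trans (by rw [e2'])
    have e3 : O (mrg S (fun i : S => g i.1) ρ) g = N₀ ρ (fun i : (Sᶜ : Set V) => g i.1) :=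
      hOev' g ρ
    have e4 : (if ∀ i ∈ S, f i = mrg S (fun i : S => g i.1) ρ i then
        M (fun i => if i ∈ S then u i else f i)
          (fun i => if i ∈ S then v i else mrg S (fun i : S => g i.1) ρ i) else 0) =
        M (fun i => if i ∈ S then u i else f i) (mrg S (fun i : S => v i.1) ρ) := by
      rw [if_pos (fun i hi => by rw [mrg_mem _ _ hi]; exact hc i hi)]
      congr 1
      funext i
      by_cases hi : i ∈ S
      · rw [if_pos hi, mrg_mem _ _ hi]
      · rw [if_neg hi, mrg_not_mem _ _ hi, mrg_not_mem _ _ hi]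
    rw [e2, e3, e4]
  · simp only [Tmap, if_neg hc, Matrix.mul_apply]
    symm
    apply Finset.sum_eq_zero
    intro h _
    by_cases hh : ∀ i ∈ S, f i = h i
    · have h0 : O h g = 0 := by
        apply supported_entry_ne hN₀
        push_neg at hc
        obtain ⟨i, hi, hne⟩ := hc
        exact ⟨i, not_mem_compl_iff.mpr hi, fun hcon => hne ((hh i hi).trans hcon)⟩
      rw [h0, mul_zero]
    · rw [if_neg hh, zero_mul]

lemma Tmap_mul_supported {S : Set V} (u v : Cfg d) {a b : Op d}
    (ha : SupportedOn d (Sᶜ) a) (hb : SupportedOn d S b) :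
    ∃ lam : ℂ, Tmap S u v (a * b) = lam • a := by
  obtain ⟨NA, hNA⟩ := ha
  obtain ⟨NB, hNB⟩ := hb
  refine ⟨NB (fun i : S => u i.1) (fun i : S => v i.1), ?_⟩
  funext f g
  by_cases hc : ∀ i ∈ S, f i = g i
  · simp only [Tmap, if_pos hc, Matrix.mul_apply, Matrix.smul_apply, smul_eq_mul]
    rw [sum_cfg_eq S _ (fun i : S => u i.1) (fun h ⟨i, hi⟩ => by
      have h0 : a (fun j => if j ∈ S then u j else f j) h = 0 := by
        apply supported_entry_ne hNA
        refine ⟨i.1, not_mem_compl_iff.mpr i.2, ?_⟩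
        rw [if_pos i.2]
        exact fun hcon => hi hcon.symm
      rw [h0, zero_mul])]
    rw [Finset.sum_eq_single_of_mem (fun i : (Sᶜ : Set V) => g i.1) (Finset.mem_univ _)
      (fun ρ _ hρ => by
        have h0 : b (mrg S (fun i : S => u i.1) ρ) (fun j => if j ∈ S then v j else g j) = 0 := by
          apply supported_entry_ne hNB
          obtain ⟨i, hi⟩ := Function.ne_iff.mp hρ
          refine ⟨i.1, i.2, ?_⟩
          rw [mrg_not_mem _ _ i.2, if_neg i.2]
          exact hi
        rw [h0, mul_zero])]
    have ea : a (fun j => if j ∈ S then u j else f j)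
        (mrg S (fun i : S => u i.1) (fun i : (Sᶜ : Set V) => g i.1)) =
        NA (fun i : (Sᶜ : Set V) => f i.1) (fun i : (Sᶜ : Set V) => g i.1) := by
      rw [hNA, if_pos]
      · congr 1
        · funext i; exact if_neg i.2
        · funext i; exact mrg_not_mem _ _ i.2
      · intro i hic
        have hiS := not_mem_compl_iff.mp hic
        rw [if_pos hiS, mrg_mem _ _ hiS]
    have eb : b (mrg S (fun i : S => u i.1) (fun i : (Sᶜ : Set V) => g i.1))
        (fun j => if j ∈ S then v j else g j) =
        NB (fun i : S => u i.1) (fun i : S => v i.1) := by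
      rw [hNB, if_pos]
      · congr 1
        · funext i; exact mrg_mem _ _ i.2
        · funext i; exact if_pos i.2
      · intro i hiS
        rw [mrg_not_mem _ _ hiS, if_neg hiS]
    rw [ea, eb, hNA f g, if_pos (fun i hic => hc i (not_mem_compl_iff.mp hic)), mul_comm]
  · simp only [Tmap, if_neg hc, Matrix.smul_apply, smul_eq_mul]
    have h0 : a f g = 0 := by
      apply supported_entry_ne hNA
      push_neg at hc
      obtain ⟨i, hi, hne⟩ := hc
      exact ⟨i, not_mem_compl_iff.mpr hi, hne⟩
    rw [h0, mul_zero]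

lemma Tmap_zero (S : Set V) (u v : Cfg d) : Tmap S u v (0 : Op d) = 0 := by
  funext f g
  simp [Tmap]

lemma Tmap_add (S : Set V) (u v : Cfg d) (M M' : Op d) :
    Tmap S u v (M + M') = Tmap S u v M + Tmap S u v M' := by
  funext f g
  simp only [Tmap, Matrix.add_apply]
  split_ifs <;> simp

lemma Tmap_smul (S : Set V) (u v : Cfg d) (c : ℂ) (M : Op d) :
    Tmap S u v (c • M) = c • Tmap S u v M := by
  funext f g
  simp only [Tmap, Matrix.smul_apply]
  split_ifs <;> simp

lemma Tmap_mem {S : Set V} (u v : Cfg d) {A₁ A₂ : Subalgebra ℂ (Op d)}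
    (h1 : ∀ a ∈ A₁, SupportedOn d (Sᶜ) a) (h2 : ∀ b ∈ A₂, SupportedOn d S b)
    {P : Op d} (hP : P ∈ Submodule.span ℂ {x : Op d | ∃ a ∈ A₁, ∃ b ∈ A₂, x = a * b}) :
    Tmap S u v P ∈ A₁ := by
  induction hP using Submodule.span_induction with
  | mem x hx =>
      obtain ⟨a, ha, b, hb, rfl⟩ := hx
      obtain ⟨lam, hl⟩ := Tmap_mul_supported u v (h1 a ha) (h2 b hb)
      rw [hl]
      exact A₁.smul_mem ha lam
  | zero => rw [Tmap_zero]; exact zero_mem _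
  | add x y hx hy ihx ihy => rw [Tmap_add]; exact add_mem ihx ihy
  | smul c x hx ih => rw [Tmap_smul]; exact A₁.smul_mem ih c

lemma mem_span_pairs {A₁ A₂ : Subalgebra ℂ (Op d)}
    (hcomm : ∀ a ∈ A₁, ∀ b ∈ A₂, a * b = b * a) {P : Op d} (hP : P ∈ A₁ ⊔ A₂) :
    P ∈ Submodule.span ℂ {x : Op d | ∃ a ∈ A₁, ∃ b ∈ A₂, x = a * b} := by
  set s : Set (Op d) := {x : Op d | ∃ a ∈ A₁, ∃ b ∈ A₂, x = a * b} with hs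
  have key : ∀ x ∈ s, ∀ y, y ∈ Submodule.span ℂ s → x * y ∈ Submodule.span ℂ s := by
    rintro x ⟨a, ha, b, hb, rfl⟩ y hy
    induction hy using Submodule.span_induction with
    | mem z hz =>
        obtain ⟨a', ha', b', hb', rfl⟩ := hz
        apply Submodule.subset_span
        refine ⟨a * a', mul_mem ha ha', b * b', mul_mem hb hb', ?_⟩
        rw [mul_assoc a b, ← mul_assoc b a' b', ← hcomm a' ha' b hb, mul_assoc a' b b',
          ← mul_assoc a a']
    | zero => rw [mul_zero]; exact zero_mem _
    | add z w hz hw ihz ihw => rw [mul_add]; exact add_mem ihz ihw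
    | smul c z hz ih => rw [mul_smul_comm]; exact Submodule.smul_mem _ _ ih
  have hmul : ∀ x y : Op d, x ∈ Submodule.span ℂ s → y ∈ Submodule.span ℂ s →
      x * y ∈ Submodule.span ℂ s := by
    intro x y hx hy
    induction hx using Submodule.span_induction with
    | mem z hz => exact key z hz y hy
    | zero => rw [zero_mul]; exact zero_mem _
    | add z w hz hw ihz ihw => rw [add_mul]; exact add_mem ihz ihw
    | smul c z hz ih => rw [smul_mul_assoc]; exact Submodule.smul_mem _ _ ih
  have hone : (1 : Op d) ∈ Submodule.span ℂ s :=
    Submodule.subset_span ⟨1, one_mem _, 1, one_mem _, (one_mul 1).symm⟩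
  have hle : A₁ ⊔ A₂ ≤ (Submodule.span ℂ s).toSubalgebra hone hmul := by
    apply sup_le
    · intro a ha
      exact Submodule.subset_span ⟨a, ha, 1, one_mem _, (mul_one a).symm⟩
    · intro b hb
      exact Submodule.subset_span ⟨1, one_mem _, b, hb, (one_mul b).symm⟩
  exact hle hP

lemma Tmap_supportedOn {S W : Set V} (u v : Cfg d) {M : Op d} (h : SupportedOn d W M) :
    SupportedOn d (W \ S) (Tmap S u v M) := by
  obtain ⟨N, hN⟩ := h
  refine ⟨fun α β => if ∀ i, i ∈ S → i ∉ W → u i = v i then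
    N (fun i : W => if h2 : i.1 ∈ S then u i.1 else α ⟨i.1, ⟨i.2, h2⟩⟩)
      (fun i : W => if h2 : i.1 ∈ S then v i.1 else β ⟨i.1, ⟨i.2, h2⟩⟩) else 0, ?_⟩
  intro f g
  simp only [Tmap]
  rw [hN]
  by_cases h1 : ∀ i ∈ S, f i = g i
  · rw [if_pos h1]
    by_cases h2 : ∀ i ∉ W, (if i ∈ S then u i else f i) = (if i ∈ S then v i else g i)
    · have hR : ∀ i ∉ W \ S, f i = g i := by
        intro i hi
        by_cases hiS : i ∈ S
        · exact h1 i hiS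
        · have hiW : i ∉ W := fun hw => hi ⟨hw, hiS⟩
          have := h2 i hiW
          rwa [if_neg hiS, if_neg hiS] at this
      have hU : ∀ i, i ∈ S → i ∉ W → u i = v i := by
        intro i hiS hiW
        have := h2 i hiW
        rwa [if_pos hiS, if_pos hiS] at this
      rw [if_pos h2, if_pos hR, if_pos hU]
      have eu : (fun i : W => if i.1 ∈ S then u i.1 else f i.1) =
          (fun i : W => if h2 : i.1 ∈ S then u i.1 else f i.1) :=
        funext fun i => by
          by_cases hiS : i.1 ∈ S
          · rw [if_pos hiS, dif_pos hiS]
          · rw [if_neg hiS, dif_neg hiS]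
      have ev : (fun i : W => if i.1 ∈ S then v i.1 else g i.1) =
          (fun i : W => if h2 : i.1 ∈ S then v i.1 else g i.1) :=
        funext fun i => by
          by_cases hiS : i.1 ∈ S
          · rw [if_pos hiS, dif_pos hiS]
          · rw [if_neg hiS, dif_neg hiS]
      rw [eu, ev]
    · rw [if_neg h2]
      symm
      by_cases hR : ∀ i ∉ W \ S, f i = g i
      · rw [if_pos hR, if_neg]
        intro hU
        apply h2
        intro i hiW
        by_cases hiS : i ∈ S
        · rw [if_pos hiS, if_pos hiS]
          exact hU i hiS hiW
        · rw [if_neg hiS, if_neg hiS]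
          exact hR i (fun hc => hiW hc.1)
      · rw [if_neg hR]
  · rw [if_neg h1, if_neg]
    intro hR
    exact h1 fun i hiS => hR i (fun hc => hc.2 hiS)

lemma aux_main {V : Type} [Fintype V] [DecidableEq V]
    [PseudoMetricSpace V] (d : V → ℕ) (l : ℝ) (S₁ S₂ : Set V)
    (A A₁ A₂ : Subalgebra ℂ (Op d))
    (hgen : A = A₁ ⊔ A₂)
    (hsupp₁ : ∀ O ∈ A₁, SupportedOn d S₁ O)
    (hsupp₂ : ∀ O ∈ A₂, SupportedOn d S₂ O)
    (hdisj : Disjoint S₁ S₂)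
    (hcomm : ∀ a ∈ A₁, ∀ b ∈ A₂, a * b = b * a)
    (hvs : VisiblySimple d l A) :
    VisiblySimple d l A₁ := by
  intro O hO x hx
  have hOA : O ∈ A := hgen ▸ (le_sup_left : A₁ ≤ A₁ ⊔ A₂) hO
  obtain ⟨P, hPA, hPsupp, hPne⟩ := hvs O hOA x hx
  have hS1 : S₁ ⊆ S₂ᶜ := fun i hi hic => (Set.disjoint_left.mp hdisj hi) hic
  have h1c : ∀ a ∈ A₁, SupportedOn d (S₂ᶜ) a :=
    fun a ha => supportedOn_mono (hsupp₁ a ha) hS1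
  have hC : O * P - P * O ≠ 0 := sub_ne_zero.mpr hPne
  have hex : ∃ f g, (O * P - P * O) f g ≠ 0 := by
    by_contra hcon
    push_neg at hcon
    exact hC (by funext f g; simpa using hcon f g)
  obtain ⟨f, g, hfg⟩ := hex
  refine ⟨Tmap S₂ f g P, ?_, ?_, ?_⟩
  · exact Tmap_mem f g h1c hsupp₂ (mem_span_pairs hcomm (hgen ▸ hPA))
  · exact supportedOn_mono (Tmap_supportedOn f g hPsupp) Set.diff_subset
  · intro hcon
    have hOQ : O * Tmap S₂ f g P - Tmap S₂ f g P * O = Tmap S₂ f g (O * P - P * O) := by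
      rw [Tmap_sub, Tmap_mul_left (h1c O hO), Tmap_mul_right (h1c O hO)]
    have hz : Tmap S₂ f g (O * P - P * O) = 0 := by
      rw [← hOQ, hcon, sub_self]
    have heval : Tmap S₂ f g (O * P - P * O) f (fun i => if i ∈ S₂ then f i else g i) =
        (O * P - P * O) f g := by
      simp only [Tmap]
      rw [if_pos (fun i hi => (if_pos hi).symm)]
      have e1 : (fun i => if i ∈ S₂ then f i else f i) = f := funext fun i => ite_self _
      have e2 : (fun i => if i ∈ S₂ then g i else if i ∈ S₂ then f i else g i) = g :=
        funext fun i => by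
          by_cases hi : i ∈ S₂
          · rw [if_pos hi]
          · rw [if_neg hi, if_neg hi]
      rw [e1, e2]
    apply hfg
    rw [← heval, hz]
    rfl

end VSAux

/-- If `A` is generated by two commuting subalgebras `A₁, A₂` supported on disjoint
sets `S₁, S₂`, and `A` is `l`-visibly simple, then so are `A₁` and `A₂`. -/
theorem visiblySimple_of_generating_factors {V : Type} [Fintype V] [DecidableEq V]
    [PseudoMetricSpace V] (d : V → ℕ) (l : ℝ) (S₁ S₂ : Set V)
    (A A₁ A₂ : Subalgebra ℂ (Op d))
    (hgen : A = A₁ ⊔ A₂)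
    (hsupp₁ : ∀ O ∈ A₁, SupportedOn d S₁ O)
    (hsupp₂ : ∀ O ∈ A₂, SupportedOn d S₂ O)
    (hdisj : Disjoint S₁ S₂)
    (hcomm : ∀ a ∈ A₁, ∀ b ∈ A₂, a * b = b * a)
    (hvs : VisiblySimple d l A) :
    VisiblySimple d l A₁ ∧ VisiblySimple d l A₂ := by
  constructor
  · exact VSAux.aux_main d l S₁ S₂ A A₁ A₂ hgen hsupp₁ hsupp₂ hdisj hcomm hvs
  · exact VSAux.aux_main d l S₂ S₁ A A₂ A₁ (by rw [hgen, sup_comm]) hsupp₂ hsupp₁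
      hdisj.symm (fun b hb a ha => (hcomm a ha b hb).symm) hvs
end

section
/- Let A be an l-visibly simple unital *-algebra of operators on a finite tensor product Hilbert space (so A has trivial center). For any operator O (not necessarily in A), if there exists X ∈ A supported on a set S with tr(XO)·tr(Id) ≠ tr(X)·tr(O), then there exists P ∈ A supported within distance l of S with [O, P] ≠ 0. -/
open Matrix

section Aux
variable {V : Type} [Fintype V] [DecidableEq V] (d : V → ℕ)

open Classical

lemma supportedOn_univ (M : Op d) : SupportedOn d Set.univ M := by
  refine ⟨fun a b => M (fun i => a ⟨i, trivial⟩) (fun i => b ⟨i, trivial⟩), fun f g => ?_⟩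
  rw [if_pos]
  intro i hi; exact absurd trivial hi

lemma supportedOn_mono {S T : Set V} (hST : S ⊆ T) {M : Op d}
    (h : SupportedOn d S M) : SupportedOn d T M := by
  obtain ⟨N, hN⟩ := h
  refine ⟨fun a b => if ∀ i : T, i.1 ∉ S → a i = b i
      then N (fun i => a ⟨i.1, hST i.2⟩) (fun i => b ⟨i.1, hST i.2⟩) else 0,
    fun f g => ?_⟩
  rw [hN f g]
  beta_reduce
  split_ifs with h1 h2 h3 h4 h5
  · rfl
  · exact absurd (fun (i : ↥T) hi => h1 i.1 hi) h3
  · exfalso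
    push_neg at h2
    obtain ⟨i, hiT, hne⟩ := h2
    exact hne (h1 i (fun hiS => hiT (hST hiS)))
  · exfalso
    push_neg at h1
    obtain ⟨i, hiS, hne⟩ := h1
    by_cases hiT : i ∈ T
    · exact hne (h5 ⟨i, hiT⟩ hiS)
    · exact hne (h4 i hiT)
  · rfl
  · rfl

lemma supportedOn_inter (f₀ : Cfg d) {S₁ S₂ : Set V} {M : Op d}
    (h₁ : SupportedOn d S₁ M) (h₂ : SupportedOn d S₂ M) :
    SupportedOn d (S₁ ∩ S₂) M := by
  obtain ⟨N₁, hN₁⟩ := h₁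
  obtain ⟨N₂, hN₂⟩ := h₂
  refine ⟨fun a b => M (fun i => if h : i ∈ S₁ ∩ S₂ then a ⟨i, h⟩ else f₀ i)
      (fun i => if h : i ∈ S₁ ∩ S₂ then b ⟨i, h⟩ else f₀ i), fun f g => ?_⟩
  split_ifs with hfg
  · -- f = g off S₁ ∩ S₂
    show M f g = M (fun i => if h : i ∈ S₁ ∩ S₂ then f i else f₀ i)
        (fun i => if h : i ∈ S₁ ∩ S₂ then g i else f₀ i)
    set f1 : Cfg d := fun i => if i ∈ S₂ then f i else f₀ i with hf1
    set g1 : Cfg d := fun i => if i ∈ S₂ then g i else f₀ i with hg1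
    set f2 : Cfg d := fun i => if i ∈ S₁ then f1 i else f₀ i with hf2
    set g2 : Cfg d := fun i => if i ∈ S₁ then g1 i else f₀ i with hg2
    have step1 : M f g = M f1 g1 := by
      rw [hN₂ f g, hN₂ f1 g1]
      have c1 : ∀ i ∉ S₂, f i = g i := fun i hi => hfg i (fun hc => hi hc.2)
      have c2 : ∀ i ∉ S₂, f1 i = g1 i := fun i hi => by simp [hf1, hg1, if_neg hi]
      rw [if_pos c1, if_pos c2]
      congr 1 <;> · funext i; simp [hf1, hg1, if_pos i.2]
    have step2 : M f1 g1 = M f2 g2 := by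
      rw [hN₁ f1 g1, hN₁ f2 g2]
      have c1 : ∀ i ∉ S₁, f1 i = g1 i := by
        intro i hi
        by_cases hi2 : i ∈ S₂
        · simp only [hf1, hg1, if_pos hi2]
          exact hfg i (fun hc => hi hc.1)
        · simp [hf1, hg1, if_neg hi2]
      have c2 : ∀ i ∉ S₁, f2 i = g2 i := fun i hi => by simp [hf2, hg2, if_neg hi]
      rw [if_pos c1, if_pos c2]
      congr 1 <;> · funext i; simp [hf2, hg2, if_pos i.2]
    have step3 : f2 = fun i => if h : i ∈ S₁ ∩ S₂ then f i else f₀ i := by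
      funext i
      by_cases h : i ∈ S₁ ∩ S₂
      · simp [hf2, hf1, h.1, h.2, dif_pos h]
      · rw [dif_neg h]
        by_cases h1 : i ∈ S₁
        · have h2 : i ∉ S₂ := fun hc => h ⟨h1, hc⟩
          simp [hf2, hf1, if_pos h1, if_neg h2]
        · simp [hf2, if_neg h1]
    have step4 : g2 = fun i => if h : i ∈ S₁ ∩ S₂ then g i else f₀ i := by
      funext i
      by_cases h : i ∈ S₁ ∩ S₂
      · simp [hg2, hg1, h.1, h.2, dif_pos h]
      · rw [dif_neg h]
        by_cases h1 : i ∈ S₁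
        · have h2 : i ∉ S₂ := fun hc => h ⟨h1, hc⟩
          simp [hg2, hg1, if_pos h1, if_neg h2]
        · simp [hg2, if_neg h1]
    rw [step1, step2, step3, step4]
  · push_neg at hfg
    obtain ⟨i, hi, hfgi⟩ := hfg
    by_cases hi1 : i ∈ S₁
    · have hi2 : i ∉ S₂ := fun hc => hi ⟨hi1, hc⟩
      rw [hN₂ f g, if_neg (by push_neg; exact ⟨i, hi2, hfgi⟩)]
    · rw [hN₁ f g, if_neg (by push_neg; exact ⟨i, hi1, hfgi⟩)]

lemma supportedOn_iInter {ι : Type} [Fintype ι] (f₀ : Cfg d) (S : ι → Set V) {M : Op d}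
    (h : ∀ i, SupportedOn d (S i) M) : SupportedOn d (⋂ i, S i) M := by
  classical
  have key : ∀ s : Finset ι, SupportedOn d (⋂ i ∈ s, S i) M := by
    intro s
    induction s using Finset.induction_on with
    | empty => simpa using supportedOn_univ d M
    | @insert a s' ha ih =>
        have e : (⋂ i ∈ insert a s', S i) = S a ∩ ⋂ i ∈ s', S i := by simp
        rw [e]
        exact supportedOn_inter d f₀ (h a) ih
  have := key Finset.univ
  simpa using this

open ComplexConjugate

lemma trace_conjTranspose_mul (M N : Op d) :
    (Mᴴ * N).trace = ∑ p : Cfg d × Cfg d, conj (M p.1 p.2) * N p.1 p.2 := by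
  rw [Matrix.trace]
  simp only [Matrix.diag_apply, Matrix.mul_apply, Matrix.conjTranspose_apply,
    starRingEnd_apply]
  rw [Fintype.sum_prod_type]
  exact Finset.sum_comm

lemma eq_zero_of_trace_conjTranspose_mul_self (M : Op d) (h : (Mᴴ * M).trace = 0) :
    M = 0 := by
  rw [trace_conjTranspose_mul] at h
  have h2 : ∀ p : Cfg d × Cfg d, conj (M p.1 p.2) * M p.1 p.2 = (Complex.normSq (M p.1 p.2) : ℂ) := by
    intro p; rw [mul_comm, Complex.mul_conj]
  rw [Finset.sum_congr rfl (fun p _ => h2 p)] at h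
  rw [← Complex.ofReal_sum] at h
  rw [Complex.ofReal_eq_zero] at h
  have h3 := (Finset.sum_eq_zero_iff_of_nonneg
    (fun p _ => Complex.normSq_nonneg (M p.1 p.2))).mp h
  ext f g
  have := h3 (f, g) (Finset.mem_univ _)
  simpa [Complex.normSq_eq_zero] using this

lemma exists_proj (A : Subalgebra ℂ (Op d)) (O : Op d) :
    ∃ G, G ∈ A ∧ ∀ a ∈ A, ((aᴴ : Op d) * (O - G)).trace = 0 := by
  classical
  let e : Op d ≃ₗ[ℂ] EuclideanSpace ℂ (Cfg d × Cfg d) :=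
    { toFun := fun M => WithLp.toLp 2 (fun p : Cfg d × Cfg d => M p.1 p.2)
      invFun := fun v i j => v (i, j)
      map_add' := fun _ _ => rfl
      map_smul' := fun _ _ => rfl
      left_inv := fun _ => rfl
      right_inv := fun _ => rfl }
  let U : Submodule ℂ (EuclideanSpace ℂ (Cfg d × Cfg d)) :=
    (Subalgebra.toSubmodule A).map e.toLinearMap
  let pr := U.orthogonalProjectionOnto (e O)
  obtain ⟨G, hGA, hGe⟩ := pr.2
  refine ⟨G, hGA, fun a ha => ?_⟩
  rw [trace_conjTranspose_mul]
  have horth : inner ℂ (e O - (pr : EuclideanSpace ℂ (Cfg d × Cfg d))) (e a) = 0 :=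
    U.starProjection_inner_eq_zero (e O) (e a) ⟨a, ha, rfl⟩
  have : e O - (pr : EuclideanSpace ℂ (Cfg d × Cfg d)) = e (O - G) := by
    rw [← hGe]; exact (map_sub e O G).symm
  rw [this] at horth
  have horth2 : (inner ℂ (e a) (e (O - G)) : ℂ) = 0 := by
    rw [← inner_conj_symm]
    rw [horth]
    simp
  rw [← horth2]
  rw [PiLp.inner_apply]
  exact Finset.sum_congr rfl (fun p _ => (RCLike.inner_apply' _ _).symm)

lemma trace_factor {S : Set V} {X G : Op d} (hX : SupportedOn d S X)
    (hG : SupportedOn d Sᶜ G) :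
    (X * G).trace * (1 : Op d).trace = X.trace * G.trace := by
  classical
  obtain ⟨NX, hNX⟩ := hX
  obtain ⟨NG, hNG⟩ := hG
  let e : Cfg d ≃ (∀ i : ↥S, Fin (d i.1)) × (∀ i : ↥(Sᶜ), Fin (d i.1)) :=
    { toFun := fun f => (fun i => f i.1, fun i => f i.1)
      invFun := fun p i => if h : i ∈ S then p.1 ⟨i, h⟩ else p.2 ⟨i, h⟩
      left_inv := by
        intro f; funext i
        by_cases h : i ∈ S
        · exact dif_pos h
        · exact dif_neg h
      right_inv := by
        rintro ⟨a, b⟩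
        refine Prod.ext ?_ ?_
        · funext i
          show (if h : i.1 ∈ S then a ⟨i.1, h⟩ else b ⟨i.1, h⟩) = a i
          rw [dif_pos i.2]
        · funext i
          show (if h : i.1 ∈ S then a ⟨i.1, h⟩ else b ⟨i.1, h⟩) = b i
          rw [dif_neg i.2] }
  have hres1 : ∀ (a : ∀ i : ↥S, Fin (d i.1)) (b : ∀ i : ↥(Sᶜ), Fin (d i.1)),
      (fun i : ↥S => e.symm (a, b) i.1) = a := by
    intro a b; funext i
    show (if h : i.1 ∈ S then a ⟨i.1, h⟩ else b ⟨i.1, h⟩) = a i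
    rw [dif_pos i.2]
  have hres2 : ∀ (a : ∀ i : ↥S, Fin (d i.1)) (b : ∀ i : ↥(Sᶜ), Fin (d i.1)),
      (fun i : ↥(Sᶜ) => e.symm (a, b) i.1) = b := by
    intro a b; funext i
    show (if h : i.1 ∈ S then a ⟨i.1, h⟩ else b ⟨i.1, h⟩) = b i
    rw [dif_neg i.2]
  set tA : ℂ := ∑ a, NX a a with htA
  set tB : ℂ := ∑ b, NG b b with htB
  set cA := Fintype.card (∀ i : ↥S, Fin (d i.1)) with hcA
  set cB := Fintype.card (∀ i : ↥(Sᶜ), Fin (d i.1)) with hcB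
  have hXdiag : ∀ f : Cfg d, X f f = NX (fun i => f i.1) (fun i => f i.1) := by
    intro f; rw [hNX f f, if_pos (fun i _ => rfl)]
  have hGdiag : ∀ f : Cfg d, G f f = NG (fun i => f i.1) (fun i => f i.1) := by
    intro f; rw [hNG f f, if_pos (fun i _ => rfl)]
  have h1 : X.trace = tA * (cB : ℂ) := by
    rw [Matrix.trace]
    simp only [Matrix.diag_apply]
    rw [← Equiv.sum_comp e.symm (fun f => X f f)]
    rw [Fintype.sum_prod_type]
    have : ∀ a b, X (e.symm (a, b)) (e.symm (a, b)) = NX a a := by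
      intro a b; rw [hXdiag, hres1]
    simp only [this]
    rw [Finset.sum_comm, Finset.sum_const, Finset.card_univ, nsmul_eq_mul]
    rw [htA, hcB, mul_comm]
  have h2 : G.trace = tB * (cA : ℂ) := by
    rw [Matrix.trace]
    simp only [Matrix.diag_apply]
    rw [← Equiv.sum_comp e.symm (fun f => G f f)]
    rw [Fintype.sum_prod_type]
    have : ∀ a b, G (e.symm (a, b)) (e.symm (a, b)) = NG b b := by
      intro a b; rw [hGdiag, hres2]
    simp only [this]
    rw [Finset.sum_const, Finset.card_univ, nsmul_eq_mul]
    rw [htB, hcA, mul_comm]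
  have h3 : (1 : Op d).trace = ((cA : ℂ) * cB) := by
    rw [Matrix.trace_one]
    rw [Fintype.card_congr e, Fintype.card_prod]
    push_cast
    ring
  have h4 : (X * G).trace = tA * tB := by
    rw [Matrix.trace]
    simp only [Matrix.diag_apply, Matrix.mul_apply]
    have hdiag : ∀ f : Cfg d, ∑ g, X f g * G g f = X f f * G f f := by
      intro f
      refine Finset.sum_eq_single f (fun g _ hg => ?_) (fun h => absurd (Finset.mem_univ f) h)
      obtain ⟨i, hi⟩ := Function.ne_iff.mp hg
      by_cases hiS : i ∈ S
      · have : G g f = 0 := by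
          rw [hNG g f, if_neg]
          push_neg
          exact ⟨i, fun hc => (Set.mem_compl_iff S i).mp hc hiS, hi⟩
        rw [this, mul_zero]
      · have : X f g = 0 := by
          rw [hNX f g, if_neg]
          push_neg
          exact ⟨i, hiS, fun hc => hi hc.symm⟩
        rw [this, zero_mul]
    simp only [hdiag]
    rw [← Equiv.sum_comp e.symm (fun f => X f f * G f f)]
    rw [Fintype.sum_prod_type]
    have : ∀ a b, X (e.symm (a, b)) (e.symm (a, b)) * G (e.symm (a, b)) (e.symm (a, b))
        = NX a a * NG b b := by
      intro a b; rw [hXdiag, hGdiag, hres1, hres2]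
    simp only [this]
    rw [← Finset.sum_mul_sum]
  rw [h1, h2, h3, h4]
  ring

end Aux


/-- In an `l`-visibly simple *-algebra `A`: for any operator `O`, if some `X ∈ A`
supported on `S` has `tr(XO)·tr(Id) ≠ tr(X)·tr(O)`, then there is `P ∈ A` supported
within distance `l` of `S` with `[O,P] ≠ 0`. -/
theorem witness_near_correlated_set {V : Type} [Fintype V] [DecidableEq V]
    [PseudoMetricSpace V] (d : V → ℕ) (l : ℝ) (A : Subalgebra ℂ (Op d))
    (hstar : ∀ a ∈ A, aᴴ ∈ A)
    (hvs : VisiblySimple d l A)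
    (O X : Op d) (S : Set V)
    (hX : X ∈ A) (hXS : SupportedOn d S X)
    (htr : (X * O).trace * (1 : Op d).trace ≠ X.trace * O.trace) :
    ∃ P ∈ A, SupportedOn d {y | ∃ x ∈ S, dist x y ≤ l} P ∧ O * P ≠ P * O := by
  classical
  by_cases hne : Nonempty (Cfg d)
  swap
  · exfalso
    haveI : IsEmpty (Cfg d) := not_nonempty_iff.mp hne
    apply htr
    simp [Matrix.trace]
  obtain ⟨f₀⟩ := hne
  obtain ⟨G, hGA, hGperp⟩ := exists_proj d A O
  have key : ∀ a ∈ A, ((aᴴ : Op d) * O).trace = ((aᴴ : Op d) * G).trace := by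
    intro a ha
    have h := hGperp a ha
    rwa [Matrix.mul_sub, Matrix.trace_sub, sub_eq_zero] at h
  have hXO : (X * O).trace = (X * G).trace := by
    have h := key Xᴴ (hstar X hX)
    rwa [Matrix.conjTranspose_conjTranspose] at h
  have hO : O.trace = G.trace := by
    have h := key 1 A.one_mem
    rwa [Matrix.conjTranspose_one, Matrix.one_mul, Matrix.one_mul] at h
  have htrG : (X * G).trace * (1 : Op d).trace ≠ X.trace * G.trace := by
    rw [← hXO, ← hO]; exact htr
  have hxs : ∃ x ∈ S, x ∈ Supp d G := by
    by_contra hc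
    push_neg at hc
    apply htrG
    refine trace_factor d hXS ?_
    set T : V → Set V := fun x =>
      if h : ∃ U, SupportedOn d U G ∧ x ∉ U then h.choose else Set.univ with hT
    have hTs : ∀ x, SupportedOn d (T x) G := by
      intro x
      by_cases h : ∃ U, SupportedOn d U G ∧ x ∉ U
      · rw [hT]; simp only [dif_pos h]; exact h.choose_spec.1
      · rw [hT]; simp only [dif_neg h]; exact supportedOn_univ d G
    have hsub : (⋂ x, T x) ⊆ Sᶜ := by
      intro y hy hyS
      have h1 : y ∉ Supp d G := hc y hyS
      have h2 : ∃ U, SupportedOn d U G ∧ y ∉ U := by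
        by_contra h2
        push_neg at h2
        exact h1 (fun U hU => h2 U hU)
      have h3 : y ∈ T y := Set.mem_iInter.mp hy y
      rw [hT] at h3
      simp only [dif_pos h2] at h3
      exact h2.choose_spec.2 h3
    exact supportedOn_mono d hsub (supportedOn_iInter d f₀ T hTs)
  obtain ⟨x, hxS, hxSupp⟩ := hxs
  obtain ⟨P, hPA, hPsupp, hPcomm⟩ := hvs G hGA x hxSupp
  refine ⟨P, hPA, supportedOn_mono d ?_ hPsupp, ?_⟩
  · intro y hy
    exact ⟨x, hxS, by rw [dist_comm]; exact Metric.mem_closedBall.mp hy⟩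
  · intro hOP
    apply hPcomm
    have hD : G * P - P * G ∈ A := A.sub_mem (A.mul_mem hGA hPA) (A.mul_mem hPA hGA)
    have hDperp : ∀ a ∈ A, ((aᴴ : Op d) * (G * P - P * G)).trace = 0 := by
      intro a ha
      have e1 : ((aᴴ : Op d) * ((O - G) * P)).trace = 0 := by
        have hmem : a * Pᴴ ∈ A := A.mul_mem ha (hstar P hPA)
        have h := hGperp (a * Pᴴ) hmem
        rw [Matrix.conjTranspose_mul, Matrix.conjTranspose_conjTranspose] at h
        rw [← Matrix.mul_assoc, Matrix.trace_mul_comm, ← Matrix.mul_assoc]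
        exact h
      have e2 : ((aᴴ : Op d) * (P * (O - G))).trace = 0 := by
        have hmem : Pᴴ * a ∈ A := A.mul_mem (hstar P hPA) ha
        have h := hGperp (Pᴴ * a) hmem
        rw [Matrix.conjTranspose_mul, Matrix.conjTranspose_conjTranspose] at h
        rwa [← Matrix.mul_assoc]
      have hsplit : G * P - P * G = P * (O - G) - (O - G) * P := by
        rw [Matrix.mul_sub, Matrix.sub_mul, hOP]
        abel
      rw [hsplit, Matrix.mul_sub, Matrix.trace_sub, e2, e1, sub_zero]
    have hzero : G * P - P * G = 0 :=
      eq_zero_of_trace_conjTranspose_mul_self d _ (hDperp _ hD)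
    exact sub_eq_zero.mp hzero
end
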